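/- Let α ∈ [0,1) and j₁ ≥ j₂ ≥ 0 be integers with max(j₁,j₂) > J for some J ≥ exp(10⁴k²), k ≥ 2, and suppose 10⁴(k-1)²A ≤ J for a real A > 0. Then Σ_{j₁,j₂ ≥ 0, max(j₁,j₂) > J} ((k-1)^{j₁+j₂}/(j₁! j₂!)) ⌈(j₁+j₂)/2⌉! A^{(j₁+j₂)/2} ≤ e^{-2J}. -/
import Mathlib

open Real

private lemma aux_pow_fact (q : ℕ) : ((q : ℝ) / Real.exp 1) ^ q ≤ q.factorial := by
  have h1 : (q:ℝ)^q / q.factorial ≤ ∑ i ∈ Finset.range (q+1), (q:ℝ)^i / i.factorial :=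
    Finset.single_le_sum (f := fun i => (q:ℝ)^i / i.factorial)
      (fun i _ => by positivity) (Finset.self_mem_range_succ q)
  have h2 := Real.sum_le_exp_of_nonneg (Nat.cast_nonneg q) (q+1)
  have h3 : (q:ℝ)^q ≤ q.factorial * Real.exp q := by
    have hq : (0:ℝ) < q.factorial := by positivity
    have := (div_le_iff₀ hq).mp (h1.trans h2)
    linarith
  have hexp : Real.exp (q : ℝ) = (Real.exp 1)^q := by
    rw [← Real.exp_nat_mul]; norm_num
  rw [div_pow, div_le_iff₀ (by positivity)]
  calc (q:ℝ)^q ≤ q.factorial * Real.exp q := h3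
    _ = q.factorial * (Real.exp 1)^q := by rw [hexp]

private lemma aux_nat_fact (j₁ j₂ : ℕ) :
    ((j₁+j₂)/2).factorial * ((j₁+j₂+1)/2).factorial ≤ j₁.factorial * j₂.factorial := by
  set n := j₁ + j₂ with hn
  have h1 : n.choose j₁ * (j₁.factorial * j₂.factorial) = n.factorial := by
    have := Nat.choose_mul_factorial_mul_factorial (Nat.le_add_right j₁ j₂)
    rw [show j₁ + j₂ - j₁ = j₂ by omega] at this
    rw [← this]; ring
  have h2 : n.choose (n/2) * ((n/2).factorial * ((n+1)/2).factorial) = n.factorial := by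
    have := Nat.choose_mul_factorial_mul_factorial (Nat.div_le_self n 2)
    rw [show n - n/2 = (n+1)/2 by omega] at this
    rw [← this]; ring
  have h3 := Nat.choose_le_middle j₁ n
  have hpos : 0 < n.choose (n/2) := Nat.choose_pos (Nat.div_le_self n 2)
  refine Nat.le_of_mul_le_mul_left ?_ hpos
  calc n.choose (n/2) * ((n/2).factorial * ((n+1)/2).factorial) = n.factorial := h2
      _ = n.choose j₁ * (j₁.factorial * j₂.factorial) := h1.symm
      _ ≤ n.choose (n/2) * (j₁.factorial * j₂.factorial) :=
          Nat.mul_le_mul_right _ h3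

set_option maxHeartbeats 1000000 in
private lemma aux_key (k J A : ℝ) (hk : 2 ≤ k) (hJ40 : 40001 ≤ J) (hA : 0 < A)
    (hAJ : 10 ^ 4 * (k - 1) ^ 2 * A ≤ J) (j₁ j₂ : ℕ) (hmax : J < max (j₁ : ℝ) (j₂ : ℝ)) :
    (k - 1) ^ (j₁ + j₂) / ((j₁.factorial : ℝ) * (j₂.factorial : ℝ)) *
      (((j₁ + j₂ + 1) / 2).factorial : ℝ) * A ^ (((j₁ + j₂ : ℕ) : ℝ) / 2)
    ≤ Real.exp (-2 * J - 2) * ((1 / 2 : ℝ) ^ j₁ * (1 / 2 : ℝ) ^ j₂) := by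
  have hfactnat := aux_nat_fact j₁ j₂
  obtain ⟨n, hn⟩ : ∃ n, j₁ + j₂ = n := ⟨_, rfl⟩
  rw [hn] at hfactnat ⊢
  obtain ⟨q, hqd⟩ : ∃ q, n / 2 = q := ⟨_, rfl⟩
  rw [hqd] at hfactnat
  have hk1 : (1 : ℝ) ≤ k - 1 := by linarith
  have hsA : 0 < Real.sqrt A := Real.sqrt_pos.mpr hA
  have hsA2 : Real.sqrt A ^ 2 = A := Real.sq_sqrt hA.le
  have hnJ : J < (n : ℝ) := by
    refine lt_of_lt_of_le hmax (max_le ?_ ?_) <;> exact Nat.cast_le.mpr (by omega)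
  have hq1 : (n : ℝ) ≤ 2 * (q : ℝ) + 1 := by exact_mod_cast Nat.cast_le.mpr (by omega : n ≤ 2 * q + 1)
  have hqJ : (J - 1) / 2 < (q : ℝ) := by linarith
  have he9 := Real.exp_one_lt_d9
  have hepos := Real.exp_pos 1
  have hqfacpos : (0 : ℝ) < q.factorial := by positivity
  have hfacpos : (0 : ℝ) < (j₁.factorial : ℝ) * j₂.factorial := by positivity
  -- rpow to pow
  have hApow : A ^ (((n : ℕ) : ℝ) / 2) = Real.sqrt A ^ n := by
    rw [Real.sqrt_eq_rpow, ← Real.rpow_natCast (A ^ ((1 : ℝ) / 2)) n, ← Real.rpow_mul hA.le]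
    congr 1; ring
  -- factorial comparison
  have hfact : (((n + 1) / 2).factorial : ℝ) * (q.factorial : ℝ) ≤
      (j₁.factorial : ℝ) * j₂.factorial := by
    rw [Nat.mul_comm] at hfactnat
    exact_mod_cast hfactnat
  have hd : (((n + 1) / 2).factorial : ℝ) / ((j₁.factorial : ℝ) * j₂.factorial) ≤
      1 / (q.factorial : ℝ) := by
    rw [div_le_div_iff₀ hfacpos hqfacpos]
    linarith
  have hterm1 : (k - 1) ^ n / ((j₁.factorial : ℝ) * j₂.factorial) *
      (((n + 1) / 2).factorial : ℝ) * Real.sqrt A ^ n ≤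
      ((k - 1) * Real.sqrt A) ^ n / (q.factorial : ℝ) := by
    calc (k - 1) ^ n / ((j₁.factorial : ℝ) * j₂.factorial) *
        (((n + 1) / 2).factorial : ℝ) * Real.sqrt A ^ n
        = ((k - 1) ^ n * Real.sqrt A ^ n) *
          ((((n + 1) / 2).factorial : ℝ) / ((j₁.factorial : ℝ) * j₂.factorial)) := by ring
      _ ≤ ((k - 1) ^ n * Real.sqrt A ^ n) * (1 / (q.factorial : ℝ)) := by
          apply mul_le_mul_of_nonneg_left hd (by positivity)
      _ = ((k - 1) * Real.sqrt A) ^ n / (q.factorial : ℝ) := by rw [mul_pow]; ring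
  -- exponential bound
  set y := 2 * ((k - 1) * Real.sqrt A) with hy
  have hypos : 0 < y := by positivity
  have hy2 : y ^ 2 ≤ J / 2500 := by
    have h : y ^ 2 = 4 * ((k - 1) ^ 2 * (Real.sqrt A ^ 2)) := by ring
    rw [h, hsA2]; nlinarith
  have hmain : y ^ n ≤ Real.exp (-2 * J - 2) * q.factorial := by
    have hsplit : y ^ n = (y ^ 2) ^ q * y ^ (n - 2 * q) := by
      rw [← pow_mul, ← pow_add]; congr 1; omega
    have h1 : (y ^ 2) ^ q ≤ (J / 2500) ^ q := pow_le_pow_left₀ (sq_nonneg y) hy2 q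
    have h2 : J / 2500 ≤ 1 / 400 * ((q : ℝ) / Real.exp 1) := by
      rw [show (1 / 400 : ℝ) * ((q : ℝ) / Real.exp 1) = (q : ℝ) / (400 * Real.exp 1) by ring,
        div_le_div_iff₀ (by norm_num) (by positivity)]
      nlinarith [mul_le_mul_of_nonneg_left he9.le (by linarith : (0:ℝ) ≤ 400 * J)]
    have h3 : (J / 2500) ^ q ≤ (1 / 400 : ℝ) ^ q * ((q : ℝ) / Real.exp 1) ^ q := by
      rw [← mul_pow]; exact pow_le_pow_left₀ (by positivity) h2 q
    have h5 : ((q : ℝ) / Real.exp 1) ^ q ≤ q.factorial := aux_pow_fact q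
    have h6 : ((1 : ℝ) / 400) ^ q ≤ Real.exp (-(5 : ℝ) * q) := by
      have h400 : Real.exp 5 ≤ 400 := by
        have h5e : Real.exp 5 = Real.exp 1 ^ 5 := by
          rw [← Real.exp_nat_mul]; norm_num
        have hp : Real.exp 1 ^ 5 ≤ (2.7182818286 : ℝ) ^ 5 :=
          pow_le_pow_left₀ hepos.le he9.le 5
        rw [h5e]
        calc Real.exp 1 ^ 5 ≤ (2.7182818286 : ℝ) ^ 5 := hp
          _ ≤ 400 := by norm_num
      have hi : ((1 : ℝ) / 400) ≤ Real.exp (-5) := by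
        rw [Real.exp_neg, inv_eq_one_div]
        exact one_div_le_one_div_of_le (Real.exp_pos 5) h400
      calc ((1 : ℝ) / 400) ^ q ≤ Real.exp (-5) ^ q := pow_le_pow_left₀ (by norm_num) hi q
        _ = Real.exp (-(5 : ℝ) * q) := by rw [← Real.exp_nat_mul]; congr 1; ring
    have h7 : y ^ (n - 2 * q) ≤ 1 + J := by
      have hcase : n - 2 * q = 0 ∨ n - 2 * q = 1 := by omega
      rcases hcase with h | h <;> rw [h]
      · rw [pow_zero]; linarith
      · rw [pow_one]; nlinarith [hy2, hypos.le, hJ40]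
    have h8 : Real.exp (-(5 : ℝ) * q) * (1 + J) ≤ Real.exp (-2 * J - 2) := by
      have hJt : (1 : ℝ) + J ≤ Real.exp (J / 2 - 9 / 2) := by
        have ha1 := Real.add_one_le_exp ((J / 2 - 9 / 2) / 2)
        have ha2 : Real.exp (J / 2 - 9 / 2) = Real.exp ((J / 2 - 9 / 2) / 2) ^ 2 := by
          rw [← Real.exp_nat_mul]; congr 1; ring
        have ha3 : ((J / 2 - 9 / 2) / 2 + 1) ^ 2 ≤ Real.exp ((J / 2 - 9 / 2) / 2) ^ 2 :=
          pow_le_pow_left₀ (by linarith) ha1 2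
        rw [ha2]; nlinarith [ha3, hJ40]
      have hmono : Real.exp (-(5 : ℝ) * q) ≤ Real.exp (-(5 : ℝ) * ((J - 1) / 2)) :=
        Real.exp_le_exp.mpr (by nlinarith [hqJ])
      calc Real.exp (-(5 : ℝ) * q) * (1 + J)
          ≤ Real.exp (-(5 : ℝ) * ((J - 1) / 2)) * Real.exp (J / 2 - 9 / 2) :=
            mul_le_mul hmono hJt (by linarith) (Real.exp_pos _).le
        _ = Real.exp (-2 * J - 2) := by rw [← Real.exp_add]; congr 1; ring
    calc y ^ n = (y ^ 2) ^ q * y ^ (n - 2 * q) := hsplit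
      _ ≤ (J / 2500) ^ q * (1 + J) :=
          mul_le_mul h1 h7 (pow_nonneg hypos.le _) (by positivity)
      _ ≤ ((1 / 400 : ℝ) ^ q * q.factorial) * (1 + J) := by
          have h45 : (J / 2500) ^ q ≤ (1 / 400 : ℝ) ^ q * q.factorial :=
            h3.trans (mul_le_mul_of_nonneg_left h5 (by positivity))
          exact mul_le_mul_of_nonneg_right h45 (by linarith)
      _ ≤ (Real.exp (-(5 : ℝ) * q) * q.factorial) * (1 + J) := by
          apply mul_le_mul_of_nonneg_right
            (mul_le_mul_of_nonneg_right h6 hqfacpos.le) (by linarith)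
      _ = (Real.exp (-(5 : ℝ) * q) * (1 + J)) * q.factorial := by ring
      _ ≤ Real.exp (-2 * J - 2) * q.factorial :=
          mul_le_mul_of_nonneg_right h8 hqfacpos.le
  -- conclude
  have hfin : ((k - 1) * Real.sqrt A) ^ n / (q.factorial : ℝ) ≤
      Real.exp (-2 * J - 2) * (1 / 2 : ℝ) ^ n := by
    have h2n : ((k - 1) * Real.sqrt A) ^ n = y ^ n * (1 / 2 : ℝ) ^ n := by
      rw [← mul_pow]; congr 1; rw [hy]; ring
    rw [h2n]
    calc y ^ n * (1 / 2 : ℝ) ^ n / (q.factorial : ℝ)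
        = (y ^ n / (q.factorial : ℝ)) * (1 / 2 : ℝ) ^ n := by ring
      _ ≤ Real.exp (-2 * J - 2) * (1 / 2 : ℝ) ^ n := by
          apply mul_le_mul_of_nonneg_right _ (by positivity)
          exact (div_le_iff₀ hqfacpos).mpr hmain
  calc (k - 1) ^ n / ((j₁.factorial : ℝ) * j₂.factorial) *
      (((n + 1) / 2).factorial : ℝ) * A ^ (((n : ℕ) : ℝ) / 2)
      = (k - 1) ^ n / ((j₁.factorial : ℝ) * j₂.factorial) *
        (((n + 1) / 2).factorial : ℝ) * Real.sqrt A ^ n := by rw [hApow]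
    _ ≤ ((k - 1) * Real.sqrt A) ^ n / (q.factorial : ℝ) := hterm1
    _ ≤ Real.exp (-2 * J - 2) * (1 / 2 : ℝ) ^ n := hfin
    _ = Real.exp (-2 * J - 2) * ((1 / 2 : ℝ) ^ j₁ * (1 / 2 : ℝ) ^ j₂) := by
        rw [← hn, pow_add]

set_option maxHeartbeats 1000000 in
/-- Tail bound: for `k ≥ 2`, `J ≥ exp(10⁴k²)` and `10⁴(k-1)²A ≤ J`,
`∑_{max(j₁,j₂) > J} ((k-1)^{j₁+j₂}/(j₁!j₂!)) ⌈(j₁+j₂)/2⌉! A^{(j₁+j₂)/2} ≤ e^{-2J}`. -/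
theorem stmt_16 (k J A : ℝ) (hk : 2 ≤ k) (hJ : Real.exp (10 ^ 4 * k ^ 2) ≤ J)
    (hA : 0 < A) (hAJ : 10 ^ 4 * (k - 1) ^ 2 * A ≤ J) :
    (∑' p : {p : ℕ × ℕ // J < max (p.1 : ℝ) (p.2 : ℝ)},
        (k - 1) ^ (p.1.1 + p.1.2) /
            ((p.1.1.factorial : ℝ) * (p.1.2.factorial : ℝ)) *
          (((p.1.1 + p.1.2 + 1) / 2).factorial : ℝ) *
          A ^ (((p.1.1 + p.1.2 : ℕ) : ℝ) / 2))
      ≤ Real.exp (-2 * J) := by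
  have hJ40 : (40001 : ℝ) ≤ J := by
    have h1 : (40000 : ℝ) ≤ 10 ^ 4 * k ^ 2 := by nlinarith
    have h2 : Real.exp 40000 ≤ Real.exp (10 ^ 4 * k ^ 2) := Real.exp_le_exp.mpr h1
    have h3 := Real.add_one_le_exp (40000 : ℝ)
    linarith
  set g : ℕ × ℕ → ℝ := fun p => Real.exp (-2 * J - 2) * ((1 / 2 : ℝ) ^ p.1 * (1 / 2 : ℝ) ^ p.2)
    with hg
  have hgs : Summable g := by
    apply Summable.mul_left
    exact Summable.mul_of_nonneg summable_geometric_two summable_geometric_two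
      (fun _ => by positivity) (fun _ => by positivity)
  have hgnn : ∀ p, 0 ≤ g p := fun p => by
    have := Real.exp_pos (-2 * J - 2); rw [hg]; positivity
  have hle : ∀ p : {p : ℕ × ℕ // J < max (p.1 : ℝ) (p.2 : ℝ)},
      (k - 1) ^ (p.1.1 + p.1.2) /
            ((p.1.1.factorial : ℝ) * (p.1.2.factorial : ℝ)) *
          (((p.1.1 + p.1.2 + 1) / 2).factorial : ℝ) *
          A ^ (((p.1.1 + p.1.2 : ℕ) : ℝ) / 2) ≤ g p.val :=
    fun p => aux_key k J A hk hJ40 hA hAJ p.1.1 p.1.2 p.2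
  have hk1 : (0 : ℝ) ≤ k - 1 := by linarith
  have hfnn : ∀ p : {p : ℕ × ℕ // J < max (p.1 : ℝ) (p.2 : ℝ)},
      0 ≤ (k - 1) ^ (p.1.1 + p.1.2) /
            ((p.1.1.factorial : ℝ) * (p.1.2.factorial : ℝ)) *
          (((p.1.1 + p.1.2 + 1) / 2).factorial : ℝ) *
          A ^ (((p.1.1 + p.1.2 : ℕ) : ℝ) / 2) := fun p => by
    apply mul_nonneg
    apply mul_nonneg
    · exact div_nonneg (pow_nonneg hk1 _) (by positivity)
    · positivity
    · exact Real.rpow_nonneg hA.le _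
  have hgsub : Summable (g ∘ (Subtype.val : {p : ℕ × ℕ // J < max (p.1 : ℝ) (p.2 : ℝ)} → ℕ × ℕ)) :=
    hgs.subtype {p : ℕ × ℕ | J < max (p.1 : ℝ) (p.2 : ℝ)}
  have hsumf : Summable (fun p : {p : ℕ × ℕ // J < max (p.1 : ℝ) (p.2 : ℝ)} =>
      (k - 1) ^ (p.1.1 + p.1.2) /
            ((p.1.1.factorial : ℝ) * (p.1.2.factorial : ℝ)) *
          (((p.1.1 + p.1.2 + 1) / 2).factorial : ℝ) *
          A ^ (((p.1.1 + p.1.2 : ℕ) : ℝ) / 2)) :=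
    Summable.of_nonneg_of_le hfnn hle hgsub
  have hexp2 : (4 : ℝ) * Real.exp (-2 * J - 2) ≤ Real.exp (-2 * J) := by
    have h1 : (2 : ℝ) ≤ Real.exp 1 := by linarith [Real.add_one_le_exp (1 : ℝ)]
    have h2 : Real.exp (-2 * J - 2) * Real.exp 2 = Real.exp (-2 * J) := by
      rw [← Real.exp_add]; congr 1; ring
    have h3 : Real.exp 2 = Real.exp 1 ^ 2 := by rw [← Real.exp_nat_mul]; norm_num
    have h4 : (4 : ℝ) ≤ Real.exp 2 := by nlinarith [h1, h3]
    have h5 := mul_le_mul_of_nonneg_left h4 (Real.exp_pos (-2 * J - 2)).le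
    linarith [h2, h5]
  calc (∑' p : {p : ℕ × ℕ // J < max (p.1 : ℝ) (p.2 : ℝ)},
        (k - 1) ^ (p.1.1 + p.1.2) /
            ((p.1.1.factorial : ℝ) * (p.1.2.factorial : ℝ)) *
          (((p.1.1 + p.1.2 + 1) / 2).factorial : ℝ) *
          A ^ (((p.1.1 + p.1.2 : ℕ) : ℝ) / 2))
      ≤ ∑' p : {p : ℕ × ℕ // J < max (p.1 : ℝ) (p.2 : ℝ)}, g p.val :=
        Summable.tsum_le_tsum hle hsumf hgsub
    _ ≤ ∑' p : ℕ × ℕ, g p := Summable.tsum_subtype_le g _ hgnn hgs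
    _ = Real.exp (-2 * J - 2) * ∑' p : ℕ × ℕ, ((1 / 2 : ℝ) ^ p.1 * (1 / 2 : ℝ) ^ p.2) := by
        rw [hg, tsum_mul_left]
    _ = Real.exp (-2 * J - 2) * 4 := by
        congr 1
        have he : ∀ n : ℕ, ‖(1 / 2 : ℝ) ^ n‖ = (1 / 2 : ℝ) ^ n :=
          fun n => Real.norm_of_nonneg (by positivity)
        have hn : Summable (fun n : ℕ => ‖(1 / 2 : ℝ) ^ n‖) := by
          simp only [he]; exact summable_geometric_two
        have h := tsum_mul_tsum_of_summable_norm (f := fun n : ℕ => (1 / 2 : ℝ) ^ n)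
          (g := fun n : ℕ => (1 / 2 : ℝ) ^ n) hn hn
        rw [tsum_geometric_two] at h
        rw [← h]; norm_num
    _ ≤ Real.exp (-2 * J) := by linarith [hexp2]
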